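/- For every rectifiable closed curve β embedded in ℝ³, 4·dist(β) ≥ conlength(β), where dist(β) = sup_{x,y∈β} d_β(x,y)/|x−y| is the distortion and conlength(β) = sup_{r>0, x∈ℝ³} length(B(x,r) ∩ β)/r is the conformal length. -/

import Mathlib

/-!
Fix a parameter `a` with `γ a ∈ B(x, r)`. Any other parameter `t` with `γ t ∈ B(x, r)` satisfies
`|γ t - γ a| < 2r`, so by the distortion bound its intrinsic distance to `a`, which is its distance
to `a` on the circle `ℝ / Lℤ`, is at most `2Dr`. Hence the parameters of `β ∩ B(x, r)` lie in a
closed arc of radius `2Dr` of that circle, whose length is at most `4Dr`.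
-/

open MeasureTheory Set

namespace AddCircle

theorem dist_coe_le_min_abs {p s t : ℝ} (h : |s - t| ≤ p) :
    dist (s : AddCircle p) t ≤ min |s - t| (p - |s - t|) := by
  rw [dist_eq_norm, ← coe_sub]
  refine le_min QuotientAddGroup.norm_mk_le_norm ?_
  calc ‖((s - t : ℝ) : AddCircle p)‖ = ‖((|s - t| - p : ℝ) : AddCircle p)‖ := by
        rw [coe_sub p |s - t| p, coe_period, sub_zero]
        rcases abs_choice (s - t) with habs | habs <;> simp only [habs, coe_neg, norm_neg]
    _ ≤ ‖|s - t| - p‖ := QuotientAddGroup.norm_mk_le_norm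
    _ = p - |s - t| := by rw [Real.norm_eq_abs, abs_sub_comm, abs_of_nonneg (sub_nonneg.2 h)]

theorem volume_le_of_forall_dist_coe_le {T : ℝ} [Fact (0 < T)] {s : Set ℝ} {t : ℝ}
    (hs : s ⊆ Icc t (t + T)) {x : AddCircle T} {ε : ℝ}
    (h : ∀ u ∈ s, dist (u : AddCircle T) x ≤ ε) :
    volume s ≤ ENNReal.ofReal (min T (2 * ε)) := by
  have hs_ball : s ⊆ ((↑) : ℝ → AddCircle T) ⁻¹' Metric.closedBall x ε ∩ Icc t (t + T) :=
    fun u hu ↦ ⟨h u hu, hs hu⟩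
  calc volume s
      ≤ volume.restrict (Icc t (t + T)) (((↑) : ℝ → AddCircle T) ⁻¹' Metric.closedBall x ε) :=
        (measure_mono hs_ball).trans (Measure.le_restrict_apply _ _)
    _ = volume (Metric.closedBall x ε) := by
        rw [← Measure.restrict_congr_set Ioc_ae_eq_Icc,
          (AddCircle.measurePreserving_mk T t).measure_preimage
            measurableSet_closedBall.nullMeasurableSet]
    _ = ENNReal.ofReal (min T (2 * ε)) := volume_closedBall T ε

end AddCircle

theorem pos_of_min_abs_le_mul_dist {X : Type*} [PseudoMetricSpace X] {L D : ℝ} {f : ℝ → X}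
    (hL : 0 < L)
    (hD : ∀ s ∈ Ico (0 : ℝ) L, ∀ t ∈ Ico (0 : ℝ) L,
      min |s - t| (L - |s - t|) ≤ D * dist (f s) (f t)) :
    0 < D := by
  have h_half := hD 0 ⟨le_rfl, hL⟩ (L / 2) ⟨by positivity, half_lt_self hL⟩
  rw [zero_sub, abs_neg, abs_of_pos (half_pos hL), sub_half, min_self] at h_half
  exact pos_of_mul_pos_left (h_half.trans_lt' (half_pos hL)) dist_nonneg

theorem stmt9_general
    (L D : ℝ) (hL : 0 < L)
    (γ : ℝ → EuclideanSpace ℝ (Fin 3))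
    -- D bounds the distortion:  d_β(γ s, γ t) ≤ D · |γ s − γ t|
    (hD : ∀ s ∈ Set.Ico (0 : ℝ) L, ∀ t ∈ Set.Ico (0 : ℝ) L,
      min |s - t| (L - |s - t|) ≤ D * dist (γ s) (γ t)) :
    -- conlength(β) ≤ 4 D :
    ∀ (x : EuclideanSpace ℝ (Fin 3)) (r : ℝ), 0 < r →
      (MeasureTheory.volume {t ∈ Set.Ico (0 : ℝ) L | γ t ∈ Metric.ball x r}).toReal
        ≤ 4 * D * r := by
  intro x r hr
  have hD_pos : 0 < D := pos_of_min_abs_le_mul_dist hL hD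
  set S := {t ∈ Ico (0 : ℝ) L | γ t ∈ Metric.ball x r}
  refine ENNReal.toReal_le_of_le_ofReal (by positivity) ?_
  obtain h_empty | ⟨a, ha, hxa⟩ := S.eq_empty_or_nonempty
  · rw [h_empty, measure_empty]; exact zero_le
  have : Fact (0 < L) := ⟨hL⟩
  have h_arc : ∀ t ∈ S, dist (t : AddCircle L) a ≤ 2 * D * r := by
    rintro t ⟨ht, hxt⟩
    have h_close : dist (γ t) (γ a) ≤ 2 * r := by
      rw [Metric.mem_ball] at hxt hxa
      linarith [dist_triangle_right (γ t) (γ a) x]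
    have h_le : |t - a| ≤ L := by
      rw [abs_le]; constructor <;> linarith [ht.1, ht.2, ha.1, ha.2]
    calc dist (t : AddCircle L) a ≤ min |t - a| (L - |t - a|) :=
          AddCircle.dist_coe_le_min_abs h_le
      _ ≤ D * dist (γ t) (γ a) := hD t ht a ha
      _ ≤ D * (2 * r) := by gcongr
      _ = 2 * D * r := by ring
  calc volume S ≤ ENNReal.ofReal (min L (2 * (2 * D * r))) :=
        AddCircle.volume_le_of_forall_dist_coe_le (t := 0)
          (fun t ht ↦ by simpa using Ico_subset_Icc_self ht.1) h_arc
    _ ≤ ENNReal.ofReal (4 * D * r) := by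
        gcongr
        linarith [min_le_right L (2 * (2 * D * r))]

theorem stmt9
    (L D : ℝ) (hL : 0 < L)
    (γ : ℝ → EuclideanSpace ℝ (Fin 3))
    (hper : ∀ t, γ (t + L) = γ t)                       -- closed curve of length L
    (hlip : LipschitzWith 1 γ)                          -- unit-speed (arclength) parametrization
    (hinj : Set.InjOn γ (Set.Ico 0 L))                  -- embedded
    -- D bounds the distortion:  d_β(γ s, γ t) ≤ D · |γ s − γ t|
    (hD : ∀ s ∈ Set.Ico (0 : ℝ) L, ∀ t ∈ Set.Ico (0 : ℝ) L,
      min |s - t| (L - |s - t|) ≤ D * dist (γ s) (γ t)) :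
    -- conlength(β) ≤ 4 D :
    ∀ (x : EuclideanSpace ℝ (Fin 3)) (r : ℝ), 0 < r →
      (MeasureTheory.volume {t ∈ Set.Ico (0 : ℝ) L | γ t ∈ Metric.ball x r}).toReal
        ≤ 4 * D * r :=
  stmt9_general L D hL γ hD
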